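/- arXiv:1206.3855 — 2 statements merged into one kernel-verified Lean document; each statement's English description precedes it below -/
import Mathlib

section
/- For c ∈ ℝ, I = (c, ∞), if f : I → ℝ satisfies the one-sided Lipschitz condition f(y') - f(y) ≤ κ(y' - y) for y ≤ y', and f(y) → +∞ as y → c⁺, then for any h > 0 with κh < 1, the map y ↦ y - h f(y) is a bijection from I onto ℝ. -/
/-!
The map `g y = y - h f y` expands distances by at least the factor `1 - κ h > 0`,
so it is strictly increasing on `(c, ∞)` and tends to `+∞` at `+∞`; it tends to `-∞` at `c⁺`
because `f` blows up there. By the intermediate value theorem it is onto `ℝ`.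
-/

open Set Filter Topology

def OneSidedLipschitzOn (κ : ℝ) (f : ℝ → ℝ) (s : Set ℝ) : Prop :=
  ∀ y ∈ s, ∀ y' ∈ s, y ≤ y' → f y' - f y ≤ κ * (y' - y)

namespace OneSidedLipschitzOn

variable {κ h : ℝ} {f : ℝ → ℝ} {s : Set ℝ}

theorem mul_sub_le_sub_mul (hf : OneSidedLipschitzOn κ f s) (hh : 0 ≤ h)
    {y y' : ℝ} (hy : y ∈ s) (hy' : y' ∈ s) (hle : y ≤ y') :
    (1 - κ * h) * (y' - y) ≤ (y' - h * f y') - (y - h * f y) := by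
  nlinarith [mul_le_mul_of_nonneg_left (hf y hy y' hy' hle) hh]

theorem strictMonoOn_sub_mul (hf : OneSidedLipschitzOn κ f s) (hh : 0 ≤ h) (hκh : κ * h < 1) :
    StrictMonoOn (fun y => y - h * f y) s := fun y hy y' hy' hlt => by
  nlinarith [hf.mul_sub_le_sub_mul hh hy hy' hlt.le]

theorem tendsto_sub_mul_atTop (hf : OneSidedLipschitzOn κ f s) (hh : 0 ≤ h) (hκh : κ * h < 1)
    {a : ℝ} (has : Ici a ⊆ s) :
    Tendsto (fun y => y - h * f y) atTop atTop := by
  have hlin : Tendsto (fun y => (a - h * f a) + (1 - κ * h) * (y - a)) atTop atTop :=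
    tendsto_atTop_add_const_left _ _ <|
      (tendsto_atTop_add_const_right _ _ tendsto_id).const_mul_atTop (by linarith)
  refine tendsto_atTop_mono' _ ?_ hlin
  filter_upwards [eventually_ge_atTop a] with y hay
  linarith [hf.mul_sub_le_sub_mul hh (has self_mem_Ici) (has hay) hay]

end OneSidedLipschitzOn

theorem tendsto_sub_mul_nhdsGT_atBot {c h : ℝ} {f : ℝ → ℝ} (hh : 0 < h)
    (hlim : Tendsto f (𝓝[>] c) atTop) :
    Tendsto (fun y => y - h * f y) (𝓝[>] c) atBot := by
  simpa only [sub_eq_add_neg] using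
    (tendsto_nhdsWithin_of_tendsto_nhds (f := fun y => y) continuous_id.continuousAt).add_atBot
      (tendsto_neg_atBot_iff.mpr (hlim.const_mul_atTop hh))

theorem stmt_1 (c : ℝ) (f : ℝ → ℝ) (κ h : ℝ)
    (hcont : ContinuousOn f (Set.Ioi c))
    (hlip : ∀ y ∈ Set.Ioi c, ∀ y' ∈ Set.Ioi c, y ≤ y' → f y' - f y ≤ κ * (y' - y))
    (hlim : Filter.Tendsto f (nhdsWithin c (Set.Ioi c)) Filter.atTop)
    (hh : 0 < h) (hκh : κ * h < 1) :
    Set.BijOn (fun y => y - h * f y) (Set.Ioi c) Set.univ := by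
  have hf : OneSidedLipschitzOn κ f (Ioi c) := hlip
  have hsurj : SurjOn (fun y => y - h * f y) (Ioi c) univ :=
    (continuousOn_id.sub (continuousOn_const.mul hcont)).surjOn_of_tendsto nonempty_Ioi
      ((tendsto_comp_coe_Ioi_atBot).mpr (tendsto_sub_mul_nhdsGT_atBot hh hlim))
      (tendsto_comp_val_Ioi_atTop.mpr
        (hf.tendsto_sub_mul_atTop hh.le hκh (Ici_subset_Ioi.mpr (lt_add_one c))))
  exact ⟨mapsTo_univ _ _, (hf.strictMonoOn_sub_mul hh.le hκh).injOn, hsurj⟩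
end

section
/- Discrete Gronwall-type estimate: let κ ≥ 0, T > 0, n > 2κT, βₗ ≤ κ, Πₖ = ∏_{l=1}^k (1 − βₗ T/n), and suppose reals (eₖ)_{k=0}^{n} with e₀ = 0 satisfy (1 − β_{k+1} T/n)·e_{k+1} = eₖ + Aₖ + Bₖ for k = 0,…,n−1, where Aₖ, Bₖ ∈ ℝ. Set M̃ₖ = ∑_{l=0}^{k−1} (1 − κT/n)^{l} Bₗ and assume |M̃ₗ| ≤ M* for all l ≤ n. Then for every k ≤ n, |eₖ| ≤ e^{2κT}·(∑_{l=0}^{k−1} |Aₗ| + 2 M*). -/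
/-!
Multiplying the recursion by `Πₖ` telescopes it to `Πₖ eₖ = ∑_{l<k} Πₗ (Aₗ + Bₗ)`. Every factor
of `Π` is at least `ρ = 1 - κT/n`, and `e^{2κT} ρⁿ ≥ 1` because `e^{-2x} ≤ 1 - x` for `x ≤ 1/2`;
hence `Πₗ ≤ Π̃ₗ ≤ Π̃ₖ ≤ e^{2κT} Πₖ` for `l ≤ k`, where `Π̃ₗ = Πₗ / ρˡ` is nondecreasing. This bounds
the `A`-part directly, and the `B`-part after writing `Πₗ Bₗ = Π̃ₗ (ρˡ Bₗ)` and summing by parts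
against the partial sums `M̃ₗ`.
-/

open Finset Real

lemma exp_neg_two_mul_le_one_sub {x : ℝ} (hx₀ : 0 ≤ x) (hx : x ≤ 1 / 2) :
    exp (-(2 * x)) ≤ 1 - x := by
  have hpos : 0 < 1 + 2 * x := by linarith
  calc exp (-(2 * x)) = (exp (2 * x))⁻¹ := exp_neg _
    _ ≤ (1 + 2 * x)⁻¹ := inv_anti₀ hpos (by linarith [add_one_le_exp (2 * x)])
    _ ≤ 1 - x := by
      rw [inv_le_iff_one_le_mul₀ hpos]
      nlinarith

lemma one_le_exp_two_mul_mul_one_sub_div_pow {a : ℝ} {n : ℕ} (ha : 0 ≤ a) (hn : 2 * a ≤ n) :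
    1 ≤ exp (2 * a) * (1 - a / n) ^ n := by
  rcases n.eq_zero_or_pos with rfl | hn₀
  · simp [ha]
  have hn₀ : (0 : ℝ) < n := Nat.cast_pos.2 hn₀
  calc 1 = exp (2 * a) * exp (-(2 * (a / n))) ^ n := by
        rw [← exp_nat_mul, ← exp_add, mul_neg, mul_left_comm, mul_div_cancel₀ _ hn₀.ne',
          add_neg_cancel, exp_zero]
    _ ≤ exp (2 * a) * (1 - a / n) ^ n := by
      gcongr
      exact exp_neg_two_mul_le_one_sub (by positivity) (by rw [div_le_iff₀ hn₀]; linarith)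

lemma abs_sum_mul_le_of_monotone {w g : ℕ → ℝ} {M : ℝ} {k : ℕ} (hw : Monotone w) (hw₀ : 0 ≤ w 0)
    (hg : ∀ l ≤ k, |∑ i ∈ range l, g i| ≤ M) :
    |∑ i ∈ range k, w i * g i| ≤ 2 * w k * M := by
  have hM : 0 ≤ M := by simpa using hg 0 (Nat.zero_le k)
  rcases k with _ | m
  · simp only [range_zero, sum_empty, abs_zero]
    positivity
  have hwm : 0 ≤ w m := hw₀.trans (hw m.zero_le)
  have hparts := sum_range_by_parts w g (m + 1)
  simp only [smul_eq_mul, add_tsub_cancel_right] at hparts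
  have hincr : |∑ i ∈ range m, (w (i + 1) - w i) * ∑ j ∈ range (i + 1), g j| ≤ (w m - w 0) * M :=
    calc _ ≤ ∑ i ∈ range m, (w (i + 1) - w i) * M := by
          refine (abs_sum_le_sum_abs _ _).trans (sum_le_sum fun i hi => ?_)
          rw [abs_mul, abs_of_nonneg (sub_nonneg.2 (hw i.le_succ))]
          gcongr
          · exact sub_nonneg.2 (hw i.le_succ)
          · exact hg _ (by have := mem_range.1 hi; omega)
      _ = (w m - w 0) * M := by rw [← sum_mul, sum_range_sub]
  calc |∑ i ∈ range (m + 1), w i * g i|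
      ≤ |w m * ∑ i ∈ range (m + 1), g i| +
        |∑ i ∈ range m, (w (i + 1) - w i) * ∑ j ∈ range (i + 1), g j| := hparts ▸ abs_sub _ _
    _ ≤ w m * M + (w m - w 0) * M := by
      rw [abs_mul, abs_of_nonneg hwm]
      gcongr
      exact hg _ le_rfl
    _ ≤ 2 * w (m + 1) * M := by nlinarith [hw m.le_succ]

section WeightedProducts

variable {g : ℕ → ℝ} {ρ E : ℝ} {n k : ℕ}

lemma prod_range_mul_eq_sum_of_mul_succ_eq {e c : ℕ → ℝ} (he₀ : e 0 = 0)
    (hrec : ∀ k < n, g k * e (k + 1) = e k + c k) (hk : k ≤ n) :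
    (∏ i ∈ range k, g i) * e k = ∑ i ∈ range k, (∏ j ∈ range i, g j) * c i := by
  induction k with
  | zero => simp [he₀]
  | succ k ih =>
    rw [prod_range_succ, sum_range_succ, ← ih (by omega), mul_assoc, hrec k hk]
    ring

lemma prod_range_pos (hρ : 0 < ρ) (hg : ∀ i, ρ ≤ g i) : 0 < ∏ i ∈ range k, g i :=
  prod_pos fun i _ => hρ.trans_le (hg i)

lemma monotone_prod_range_div_pow (hρ : 0 < ρ) (hg : ∀ i, ρ ≤ g i) :
    Monotone fun k => (∏ i ∈ range k, g i) / ρ ^ k := by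
  refine monotone_nat_of_le_succ fun k => ?_
  have hP := prod_range_pos (k := k) hρ hg
  rw [prod_range_succ, pow_succ, ← div_mul_div_comm]
  exact le_mul_of_one_le_right (by positivity) ((one_le_div hρ).2 (hg k))

lemma prod_range_div_pow_le_mul_prod_range (hρ : 0 < ρ) (hg : ∀ i, ρ ≤ g i) (hρ₁ : ρ ≤ 1)
    (hE : 1 ≤ E * ρ ^ n) (hk : k ≤ n) :
    (∏ i ∈ range k, g i) / ρ ^ k ≤ E * ∏ i ∈ range k, g i := by
  have hP := prod_range_pos (k := k) hρ hg
  have hE₀ : 0 ≤ E := le_of_mul_le_mul_right (by simpa using zero_le_one.trans hE) (pow_pos hρ n)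
  have hEk : 1 ≤ E * ρ ^ k := hE.trans
    (mul_le_mul_of_nonneg_left (pow_le_pow_of_le_one hρ.le hρ₁ hk) hE₀)
  rw [div_le_iff₀ (pow_pos hρ k)]
  nlinarith

lemma prod_range_le_mul_prod_range (hρ : 0 < ρ) (hg : ∀ i, ρ ≤ g i) (hρ₁ : ρ ≤ 1)
    (hE : 1 ≤ E * ρ ^ n) {i : ℕ} (hi : i ≤ k) (hk : k ≤ n) :
    ∏ j ∈ range i, g j ≤ E * ∏ j ∈ range k, g j :=
  calc ∏ j ∈ range i, g j ≤ (∏ j ∈ range i, g j) / ρ ^ i :=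
        le_div_self (prod_range_pos hρ hg).le (pow_pos hρ i) (pow_le_one₀ hρ.le hρ₁)
    _ ≤ (∏ j ∈ range k, g j) / ρ ^ k := monotone_prod_range_div_pow hρ hg hi
    _ ≤ E * ∏ j ∈ range k, g j := prod_range_div_pow_le_mul_prod_range hρ hg hρ₁ hE hk

lemma abs_sum_prod_range_mul_le (hρ : 0 < ρ) (hg : ∀ i, ρ ≤ g i) (hρ₁ : ρ ≤ 1)
    (hE : 1 ≤ E * ρ ^ n) {a : ℕ → ℝ} (hk : k ≤ n) :
    |∑ i ∈ range k, (∏ j ∈ range i, g j) * a i| ≤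
      E * (∏ i ∈ range k, g i) * ∑ i ∈ range k, |a i| := by
  rw [mul_sum]
  refine (abs_sum_le_sum_abs _ _).trans (sum_le_sum fun i hi => ?_)
  rw [abs_mul, abs_of_pos (prod_range_pos hρ hg)]
  gcongr
  exact prod_range_le_mul_prod_range hρ hg hρ₁ hE (mem_range.1 hi).le hk

lemma abs_sum_prod_range_mul_le_of_abs_sum_le (hρ : 0 < ρ) (hg : ∀ i, ρ ≤ g i) (hρ₁ : ρ ≤ 1)
    (hE : 1 ≤ E * ρ ^ n) {b : ℕ → ℝ} {M : ℝ} (hb : ∀ l ≤ k, |∑ i ∈ range l, ρ ^ i * b i| ≤ M)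
    (hk : k ≤ n) :
    |∑ i ∈ range k, (∏ j ∈ range i, g j) * b i| ≤ 2 * (E * ∏ i ∈ range k, g i) * M := by
  have hM : 0 ≤ M := by simpa using hb 0 k.zero_le
  have hsplit : ∀ i, (∏ j ∈ range i, g j) * b i = (∏ j ∈ range i, g j) / ρ ^ i * (ρ ^ i * b i) :=
    fun i => by field_simp
  simp only [hsplit]
  refine (abs_sum_mul_le_of_monotone (monotone_prod_range_div_pow hρ hg) (by simp) hb).trans ?_
  gcongr
  exact prod_range_div_pow_le_mul_prod_range hρ hg hρ₁ hE hk

theorem abs_le_of_mul_succ_eq (hρ : 0 < ρ) (hg : ∀ i, ρ ≤ g i) (hρ₁ : ρ ≤ 1)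
    (hE : 1 ≤ E * ρ ^ n) {e a b : ℕ → ℝ} {M : ℝ} (he₀ : e 0 = 0)
    (hrec : ∀ k < n, g k * e (k + 1) = e k + a k + b k)
    (hb : ∀ l ≤ n, |∑ i ∈ range l, ρ ^ i * b i| ≤ M) (hk : k ≤ n) :
    |e k| ≤ E * (∑ i ∈ range k, |a i| + 2 * M) := by
  have hP := prod_range_pos (k := k) hρ hg
  have hsum : (∏ i ∈ range k, g i) * e k =
      ∑ i ∈ range k, (∏ j ∈ range i, g j) * a i + ∑ i ∈ range k, (∏ j ∈ range i, g j) * b i := by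
    rw [prod_range_mul_eq_sum_of_mul_succ_eq he₀ (c := fun i => a i + b i)
      (fun k hk => by rw [hrec k hk, add_assoc]) hk, ← sum_add_distrib]
    simp only [mul_add]
  refine le_of_mul_le_mul_left ?_ hP
  calc (∏ i ∈ range k, g i) * |e k| = |(∏ i ∈ range k, g i) * e k| := by
        rw [abs_mul, abs_of_pos hP]
    _ ≤ E * (∏ i ∈ range k, g i) * ∑ i ∈ range k, |a i| +
          2 * (E * ∏ i ∈ range k, g i) * M := by
        rw [hsum]
        exact (abs_add_le _ _).trans <| add_le_add (abs_sum_prod_range_mul_le hρ hg hρ₁ hE hk)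
          (abs_sum_prod_range_mul_le_of_abs_sum_le hρ hg hρ₁ hE (fun l hl => hb l (hl.trans hk))
            hk)
    _ = (∏ i ∈ range k, g i) * (E * (∑ i ∈ range k, |a i| + 2 * M)) := by ring

end WeightedProducts

theorem stmt_13 (κ T Mstar : ℝ) (n : ℕ) (β e A B : ℕ → ℝ)
    (hκ : 0 ≤ κ) (hT : 0 < T) (hn : 2 * κ * T < n)
    (hβ : ∀ l, β l ≤ κ) (he0 : e 0 = 0)
    (hrec : ∀ k < n, (1 - β (k + 1) * (T / n)) * e (k + 1) = e k + A k + B k)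
    (hM : ∀ l ≤ n, |∑ i ∈ Finset.range l, (1 - κ * T / n) ^ i * B i| ≤ Mstar) :
    ∀ k ≤ n, |e k| ≤ Real.exp (2 * κ * T) * (∑ l ∈ Finset.range k, |A l| + 2 * Mstar) := by
  have hn₀ : (0 : ℝ) < n := lt_of_le_of_lt (by positivity) hn
  have hρ : 0 < 1 - κ * T / n := by rw [sub_pos, div_lt_one hn₀]; nlinarith
  have hρ₁ : 1 - κ * T / n ≤ 1 := sub_le_self _ (by positivity)
  have hg : ∀ i, 1 - κ * T / n ≤ 1 - β (i + 1) * (T / n) := fun i => by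
    rw [mul_div_assoc]; gcongr; exact hβ _
  have hE : 1 ≤ exp (2 * κ * T) * (1 - κ * T / n) ^ n := by
    simpa only [mul_assoc] using
      one_le_exp_two_mul_mul_one_sub_div_pow (by positivity) (by linarith)
  exact fun k hk => abs_le_of_mul_succ_eq hρ hg hρ₁ hE he0 hrec hM hk
end
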